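/- arXiv:2002.03659 — 2 statements merged into one kernel-verified Lean document; each statement's English description precedes it below -/
import Mathlib

section
/- Fix 0 < r < 1, θ ∈ (0,1], 0 ≤ s ≤ m, and 0 < α ≤ 1. If f : E → ℝ^m satisfies |f(x) − f(y)| ≤ |x − y|^α for all x, y ∈ E ⊂ ℝⁿ, then for all x, y ∈ E, φ^{s,m}_{r,θ}(f(x) − f(y)) ≥ φ^{sα, mα}_{r^{1/α}, θ}(x − y), where φ^{s,m}_{r,θ}(z) = min(1, r^s/|z|^s, r^{θ(m−s)+s}/|z|^m). -/
/-- The kernel `φ^{s,m}_{r,θ}` as a function of the distance `d = |z|`: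
`1` if `d < r`, `(r/d)^s` if `r ≤ d < r^θ`, and `r^{θ(m-s)+s}/d^m` if `d ≥ r^θ`. -/
noncomputable def phiK (r θ s m d : ℝ) : ℝ :=
  if d < r then 1 else if d < r ^ θ then (r / d) ^ s else r ^ (θ * (m - s) + s) / d ^ m

lemma phiK_anti {r θ s m : ℝ} (hr0 : 0 < r) (hr1 : r < 1) (hθ0 : 0 < θ) (hθ1 : θ ≤ 1)
    (hs0 : 0 ≤ s) (hsm : s ≤ m) {d1 d2 : ℝ} (h : d1 ≤ d2) :
    phiK r θ s m d2 ≤ phiK r θ s m d1 := by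
  have hm0 : 0 ≤ m := hs0.trans hsm
  have hrθ : 0 < r ^ θ := Real.rpow_pos_of_pos hr0 θ
  have hpow : ∀ d : ℝ, r ^ θ ≤ d → r ^ (θ * m) ≤ d ^ m := by
    intro d hd
    calc r ^ (θ * m) = (r ^ θ) ^ m := by rw [← Real.rpow_mul hr0.le]
      _ ≤ d ^ m := Real.rpow_le_rpow hrθ.le hd hm0
  unfold phiK
  by_cases h1r : d1 < r
  · by_cases h2r : d2 < r
    · simp [h1r, h2r]
    · rw [if_pos h1r, if_neg h2r]
      by_cases h2θ : d2 < r ^ θ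
      · rw [if_pos h2θ]
        have hd2 : 0 < d2 := hr0.trans_le (not_lt.1 h2r)
        exact Real.rpow_le_one (div_pos hr0 hd2).le
          ((div_le_one hd2).2 (not_lt.1 h2r)) hs0
      · rw [if_neg h2θ]
        have hd2 : 0 < d2 := hrθ.trans_le (not_lt.1 h2θ)
        rw [div_le_one (Real.rpow_pos_of_pos hd2 m)]
        calc r ^ (θ * (m - s) + s) = r ^ (θ * m) * r ^ ((1 - θ) * s) := by
              rw [← Real.rpow_add hr0]; ring_nf
          _ ≤ r ^ (θ * m) * 1 := by
              gcongr
              exact Real.rpow_le_one hr0.le hr1.le (mul_nonneg (by linarith) hs0)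
          _ = r ^ (θ * m) := mul_one _
          _ ≤ d2 ^ m := hpow d2 (not_lt.1 h2θ)
  · have hd1 : 0 < d1 := hr0.trans_le (not_lt.1 h1r)
    have h2r : ¬ d2 < r := fun hc => h1r (lt_of_le_of_lt h hc)
    rw [if_neg h1r, if_neg h2r]
    by_cases h1θ : d1 < r ^ θ
    · rw [if_pos h1θ]
      by_cases h2θ : d2 < r ^ θ
      · rw [if_pos h2θ]
        exact Real.rpow_le_rpow (div_pos hr0 (hd1.trans_le h)).le
          (div_le_div_of_nonneg_left hr0.le hd1 h) hs0
      · rw [if_neg h2θ]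
        have hd2 : 0 < d2 := hrθ.trans_le (not_lt.1 h2θ)
        rw [Real.div_rpow hr0.le hd1.le,
          div_le_div_iff₀ (Real.rpow_pos_of_pos hd2 m) (Real.rpow_pos_of_pos hd1 s)]
        calc r ^ (θ * (m - s) + s) * d1 ^ s
            ≤ r ^ (θ * (m - s) + s) * (r ^ θ) ^ s :=
              mul_le_mul_of_nonneg_left (Real.rpow_le_rpow hd1.le h1θ.le hs0)
                (Real.rpow_nonneg hr0.le _)
          _ = r ^ s * r ^ (θ * m) := by
              rw [← Real.rpow_mul hr0.le, ← Real.rpow_add hr0, ← Real.rpow_add hr0]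
              ring_nf
          _ ≤ r ^ s * d2 ^ m :=
              mul_le_mul_of_nonneg_left (hpow d2 (not_lt.1 h2θ))
                (Real.rpow_nonneg hr0.le _)
    · have h2θ : ¬ d2 < r ^ θ := fun hc => h1θ (lt_of_le_of_lt h hc)
      rw [if_neg h1θ, if_neg h2θ]
      have hd1θ : 0 < d1 := hrθ.trans_le (not_lt.1 h1θ)
      exact div_le_div_of_nonneg_left (Real.rpow_nonneg hr0.le _)
        (Real.rpow_pos_of_pos hd1θ m) (Real.rpow_le_rpow hd1θ.le h hm0)

lemma phiK_comp {r θ s m α : ℝ} (hr0 : 0 < r) (hα0 : 0 < α) {d : ℝ} (hd : 0 ≤ d) :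
    phiK (r ^ (1 / α)) θ (s * α) (m * α) d = phiK r θ s m (d ^ α) := by
  have hα : α ≠ 0 := hα0.ne'
  have hkey : ∀ t : ℝ, 0 < t → (d < t ^ (1 / α) ↔ d ^ α < t) := by
    intro t ht
    constructor
    · intro hlt
      calc d ^ α < (t ^ (1 / α)) ^ α := Real.rpow_lt_rpow hd hlt hα0
        _ = t := by rw [← Real.rpow_mul ht.le, one_div_mul_cancel hα, Real.rpow_one]
    · intro hlt
      have := Real.rpow_lt_rpow (Real.rpow_nonneg hd α) hlt (by positivity : (0:ℝ) < 1/α)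
      rwa [← Real.rpow_mul hd, mul_one_div_cancel hα, Real.rpow_one] at this
  unfold phiK
  rw [← Real.rpow_mul hr0.le (1/α) θ, mul_comm (1/α) θ, Real.rpow_mul hr0.le θ (1/α)]
  by_cases h1 : d < r ^ (1 / α)
  · rw [if_pos h1, if_pos ((hkey r hr0).1 h1)]
  · rw [if_neg h1, if_neg (fun hc => h1 ((hkey r hr0).2 hc))]
    have hd0 : 0 < d := lt_of_lt_of_le (Real.rpow_pos_of_pos hr0 _) (not_lt.1 h1)
    have hrθ : 0 < r ^ θ := Real.rpow_pos_of_pos hr0 θ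
    by_cases h2 : d < (r ^ θ) ^ (1 / α)
    · rw [if_pos h2, if_pos ((hkey _ hrθ).1 h2)]
      rw [Real.div_rpow (Real.rpow_nonneg hr0.le _) hd0.le,
        Real.div_rpow hr0.le (Real.rpow_nonneg hd0.le _),
        ← Real.rpow_mul hr0.le, ← Real.rpow_mul hd0.le]
      congr 1
      · congr 1
        field_simp
      · rw [mul_comm α s]
    · rw [if_neg h2, if_neg (fun hc => h2 ((hkey _ hrθ).2 hc))]
      rw [← Real.rpow_mul hr0.le, ← Real.rpow_mul hd0.le]
      congr 1
      · congr 1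
        field_simp
      · rw [mul_comm α m]

theorem stmt1 {n k : ℕ} (E : Set (EuclideanSpace ℝ (Fin n)))
    (f : EuclideanSpace ℝ (Fin n) → EuclideanSpace ℝ (Fin k))
    (r θ s m α : ℝ)
    (hr0 : 0 < r) (hr1 : r < 1) (hθ0 : 0 < θ) (hθ1 : θ ≤ 1)
    (hs0 : 0 ≤ s) (hsm : s ≤ m) (hα0 : 0 < α) (hα1 : α ≤ 1)
    (hHolder : ∀ x ∈ E, ∀ y ∈ E, ‖f x - f y‖ ≤ ‖x - y‖ ^ α) :
    ∀ x ∈ E, ∀ y ∈ E,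
      phiK (r ^ (1 / α)) θ (s * α) (m * α) ‖x - y‖ ≤ phiK r θ s m ‖f x - f y‖ := by
  intro x hx y hy
  rw [phiK_comp hr0 hα0 (norm_nonneg _)]
  exact phiK_anti hr0 hr1 hθ0 hθ1 hs0 hsm (hHolder x hx y hy)
end

section
/- Let (Ω, 𝓕, τ) be a probability space, E ⊂ ℝⁿ, θ ∈ (0,1], γ > 0 and 0 ≤ s < m. Suppose {f_ω : E → ℝ^m} is a measurable family such that there exists c > 0 with τ({ω : |f_ω(x) − f_ω(y)| ≤ r}) ≤ c·min(1, (r^γ/|x−y|)^{m/γ}) for all x, y ∈ E and r > 0. Then for all 0 < r < 1 and x, y ∈ E, ∫ φ̃^s_{r,θ}(|f_ω(x) − f_ω(y)|) dτ(ω) ≤ c·(s/(m−s) + 1)·φ^{s/γ, m/γ}_{r^γ, θ}(x − y). -/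
open MeasureTheory

/-- The modified kernel `φ̃^s_{r,θ}` as a function of the distance. -/
noncomputable def phiT (r θ s d : ℝ) : ℝ :=
  if d < r then 1 else if d ≤ r ^ θ then (r / d) ^ s else 0

/-!
Write `Z = ‖f_ω(x) - f_ω(y)‖` and `D = ‖x - y‖`; only `r ^ γ ≤ D` needs work. There
`t < φ̃(Z)` forces `Z ≤ r ^ θ` and `Z ≤ r t ^ (-1/s)`, so the hypothesis bounds the tail
`τ {t < φ̃(Z)}` by `min (A, C t ^ (-m/s))` with `A = c φ^{0, m/γ}_{r^γ, θ}(D)` and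
`C = c (r ^ γ / D) ^ (m/γ)`. By the layer-cake formula the integral is at most
`m / (m - s) · A ^ (1 - s/m) C ^ (s/m)`, and this geometric mean of the kernels with `s = 0` and
`s = m` is exactly `c φ^{s/γ, m/γ}_{r^γ, θ}(D)`. For `s = 0` the bound `φ̃(Z) ≤ 1_{Z ≤ r^θ}`
suffices.
-/

open Set

lemma phiT_nonneg {r θ s d : ℝ} (hr : 0 < r) : 0 ≤ phiT r θ s d := by
  unfold phiT
  split_ifs with h
  · exact zero_le_one
  · exact Real.rpow_nonneg (div_nonneg hr.le (hr.trans_le (not_lt.1 h)).le) s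
  · exact le_rfl

lemma phiT_le_one {r θ s d : ℝ} (hr : 0 < r) (hs : 0 ≤ s) : phiT r θ s d ≤ 1 := by
  unfold phiT
  split_ifs with h
  · exact le_rfl
  · have hd := not_lt.1 h
    exact Real.rpow_le_one (div_nonneg hr.le (hr.trans_le hd).le)
      ((div_le_one (hr.trans_le hd)).2 hd) hs
  · exact zero_le_one

lemma measurable_phiT (r θ s : ℝ) : Measurable (phiT r θ s) := by
  refine Measurable.ite measurableSet_Iio measurable_const
    (Measurable.ite measurableSet_Iic ?_ measurable_const)
  exact (measurable_const.div measurable_id).pow_const s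

lemma phiT_eq_zero_of_lt {r θ s d : ℝ} (hrθ : r ≤ r ^ θ) (hd : r ^ θ < d) :
    phiT r θ s d = 0 := by
  rw [phiT, if_neg (hrθ.trans_lt hd).not_gt, if_neg hd.not_ge]

lemma le_mul_rpow_of_lt_phiT {r θ s d t : ℝ} (hr : 0 < r) (hs : 0 < s) (ht : 0 < t)
    (h : t < phiT r θ s d) : d ≤ r * t ^ (-s⁻¹) := by
  have ht1 : t < 1 := h.trans_le (phiT_le_one hr hs.le)
  unfold phiT at h
  split_ifs at h with hdr hdθ
  · exact hdr.le.trans (le_mul_of_one_le_right hr.le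
      (Real.one_le_rpow_of_pos_of_le_one_of_nonpos ht ht1.le (by simp [hs.le])))
  · have hd : 0 < d := hr.trans_le (not_lt.1 hdr)
    have h' : t ^ s⁻¹ < r / d := (Real.rpow_inv_lt_iff_of_pos ht.le (by positivity) hs).2 h
    rw [Real.rpow_neg ht.le, ← div_eq_mul_inv, le_div_iff₀ (by positivity)]
    rw [lt_div_iff₀ hd] at h'
    linarith
  · exact absurd h ht.not_gt

lemma phiK_nonneg {R θ S M d : ℝ} (hR : 0 < R) : 0 ≤ phiK R θ S M d := by
  unfold phiK
  split_ifs with h1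
  · exact zero_le_one
  · exact Real.rpow_nonneg (div_nonneg hR.le (hR.trans_le (not_lt.1 h1)).le) S
  · exact div_nonneg (Real.rpow_nonneg hR.le _)
      (Real.rpow_nonneg (hR.trans_le (not_lt.1 h1)).le M)

lemma phiK_pos {R θ S M d : ℝ} (hR : 0 < R) (hd : 0 < d) : 0 < phiK R θ S M d := by
  unfold phiK
  split_ifs <;> positivity

lemma phiK_self_le {R θ M d : ℝ} (hR : 0 < R) (hd : 0 < d) (hM : 0 ≤ M) :
    phiK R θ M M d ≤ (R / d) ^ M := by
  unfold phiK
  split_ifs with h1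
  · exact Real.one_le_rpow ((one_le_div hd).2 h1.le) hM
  · exact le_rfl
  · rw [sub_self, mul_zero, zero_add, Real.div_rpow hR.le hd.le]

lemma phiK_zero_eq_div_rpow {R θ M d : ℝ} (hR : 0 < R) (hRd : R ≤ d) (hd : R ^ θ ≤ d) :
    phiK R θ 0 M d = (R ^ θ / d) ^ M := by
  rw [phiK, if_neg hRd.not_gt, if_neg hd.not_gt,
    Real.div_rpow (by positivity) (hR.trans_le hRd).le, ← Real.rpow_mul hR.le]
  ring_nf

lemma phiK_interpolate {R θ S M d : ℝ} (hR : 0 < R) (hRd : R ≤ d) (hM : M ≠ 0) :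
    phiK R θ 0 M d ^ (1 - S / M) * ((R / d) ^ M) ^ (S / M) = phiK R θ S M d := by
  have hd : 0 < d := hR.trans_le hRd
  unfold phiK
  rw [if_neg hRd.not_gt, if_neg hRd.not_gt]
  split_ifs
  · rw [Real.rpow_zero, Real.one_rpow, one_mul, ← Real.rpow_mul (div_nonneg hR.le hd.le),
      mul_div_cancel₀ S hM]
  · rw [Real.div_rpow (by positivity) (by positivity), Real.div_rpow hR.le hd.le,
      Real.div_rpow (by positivity) (by positivity), ← Real.rpow_mul hR.le, ← Real.rpow_mul hR.le,
      ← Real.rpow_mul hd.le, ← Real.rpow_mul hd.le, div_mul_div_comm,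
      ← Real.rpow_add hR, ← Real.rpow_add hd]
    congr 2
    · field_simp
      ring
    · field_simp
      ring

lemma setIntegral_Ioi_le_of_le_min_rpow {h : ℝ → ℝ} {A C p : ℝ} (hp : 1 < p) (hA : 0 < A)
    (hC : 0 < C) (hh : Measurable h) (h0 : ∀ t, 0 ≤ h t) (hhA : ∀ t, 0 < t → h t ≤ A)
    (hhC : ∀ t, 0 < t → h t ≤ C * t ^ (-p)) :
    ∫ t in Ioi 0, h t ≤ p / (p - 1) * A ^ (1 - p⁻¹) * C ^ p⁻¹ := by
  -- split at the crossover point `T`, where `A = C * T ^ (-p)`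
  set T := (C / A) ^ p⁻¹ with hT
  have hp0 : p ≠ 0 := by positivity
  have hT0 : 0 < T := by positivity
  have hTA : C * T ^ (-p + 1) = A * T := by
    rw [Real.rpow_add hT0, Real.rpow_one, ← mul_assoc, hT, ← Real.rpow_mul (by positivity),
      mul_neg, inv_mul_cancel₀ hp0, Real.rpow_neg_one, inv_div, mul_div_cancel₀ _ hC.ne']
  have hAT : A * T = A ^ (1 - p⁻¹) * C ^ p⁻¹ := by
    rw [hT, Real.div_rpow hC.le hA.le, Real.rpow_sub hA, Real.rpow_one]
    ring
  have hrpow : IntegrableOn (fun t => C * t ^ (-p)) (Ioi T) :=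
    (integrableOn_Ioi_rpow_of_lt (by linarith) hT0).const_mul C
  have hInt₁ : IntegrableOn h (Ioc 0 T) :=
    Integrable.mono' (integrableOn_const measure_Ioc_lt_top.ne) hh.aestronglyMeasurable
      (ae_restrict_of_forall_mem measurableSet_Ioc fun t ht => by
        rw [Real.norm_of_nonneg (h0 t)]; exact hhA t ht.1)
  have hInt₂ : IntegrableOn h (Ioi T) :=
    Integrable.mono' hrpow hh.aestronglyMeasurable
      (ae_restrict_of_forall_mem measurableSet_Ioi fun t ht => by
        rw [Real.norm_of_nonneg (h0 t)]; exact hhC t (hT0.trans ht))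
  have hle₁ : ∫ t in Ioc 0 T, h t ≤ A * T := by
    calc ∫ t in Ioc 0 T, h t ≤ ∫ _ in Ioc 0 T, A :=
          setIntegral_mono_on hInt₁ (integrableOn_const measure_Ioc_lt_top.ne) measurableSet_Ioc
            fun t ht => hhA t ht.1
      _ = A * T := by
          rw [setIntegral_const, Real.volume_real_Ioc_of_le hT0.le, smul_eq_mul, sub_zero, mul_comm]
  have hle₂ : ∫ t in Ioi T, h t ≤ A * T / (p - 1) := by
    calc ∫ t in Ioi T, h t ≤ ∫ t in Ioi T, C * t ^ (-p) :=
          setIntegral_mono_on hInt₂ hrpow measurableSet_Ioi fun t ht => hhC t (hT0.trans ht)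
      _ = A * T / (p - 1) := by
          rw [integral_const_mul, integral_Ioi_rpow_of_lt (by linarith) hT0, ← hTA]
          field_simp [show -p + 1 ≠ 0 by linarith, show p - 1 ≠ 0 by linarith]
          ring
  rw [← Ioc_union_Ioi_eq_Ioi hT0.le,
    setIntegral_union Ioc_disjoint_Ioi_same measurableSet_Ioi hInt₁ hInt₂]
  calc _ ≤ A * T + A * T / (p - 1) := add_le_add hle₁ hle₂
    _ = p / (p - 1) * A ^ (1 - p⁻¹) * C ^ p⁻¹ := by
        rw [mul_assoc, ← hAT]
        field_simp [show p - 1 ≠ 0 by linarith]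
        ring

section TailBound

variable {Ω : Type*} [MeasurableSpace Ω] {τ : Measure Ω} {Z : Ω → ℝ}
  {θ γ s m c D r : ℝ}

lemma measureReal_le_div_rpow (hc : 0 ≤ c) (hγ : 0 < γ) (hm : 0 ≤ m)
    (hZ : ∀ ρ, 0 < ρ → τ {ω | Z ω ≤ ρ} ≤ ENNReal.ofReal (c * phiK (ρ ^ γ) θ (m / γ) (m / γ) D))
    {ρ : ℝ} (hρ : 0 < ρ) (hD : 0 < D) :
    τ.real {ω | Z ω ≤ ρ} ≤ c * (ρ ^ γ / D) ^ (m / γ) :=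
  (ENNReal.toReal_le_of_le_ofReal (mul_nonneg hc (phiK_nonneg (by positivity))) (hZ ρ hρ)).trans
    (mul_le_mul_of_nonneg_left (phiK_self_le (by positivity) hD (by positivity)) hc)

lemma measureReal_le_rpow_le_phiK_zero [IsProbabilityMeasure τ] (hc : 1 ≤ c) (hγ : 0 < γ)
    (hm : 0 ≤ m)
    (hZ : ∀ ρ, 0 < ρ → τ {ω | Z ω ≤ ρ} ≤ ENNReal.ofReal (c * phiK (ρ ^ γ) θ (m / γ) (m / γ) D))
    (hr : 0 < r) (hrD : r ^ γ ≤ D) :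
    τ.real {ω | Z ω ≤ r ^ θ} ≤ c * phiK (r ^ γ) θ 0 (m / γ) D := by
  by_cases hD : D < (r ^ γ) ^ θ
  · rw [phiK, if_neg hrD.not_gt, if_pos hD, Real.rpow_zero, mul_one]
    exact measureReal_le_one.trans hc
  · rw [phiK_zero_eq_div_rpow (by positivity) hrD (not_lt.1 hD), ← Real.rpow_mul hr.le, mul_comm γ,
      Real.rpow_mul hr.le]
    exact measureReal_le_div_rpow (by linarith) hγ hm hZ (by positivity)
      ((by positivity : 0 < r ^ γ).trans_le hrD)

lemma integrable_phiT_comp [IsFiniteMeasure τ] (hr : 0 < r) (hs : 0 ≤ s) (hZm : Measurable Z) :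
    Integrable (fun ω => phiT r θ s (Z ω)) τ :=
  (integrable_const 1).mono' ((measurable_phiT r θ s).comp hZm).aestronglyMeasurable
    (ae_of_all _ fun ω => by
      rw [Real.norm_of_nonneg (phiT_nonneg hr)]; exact phiT_le_one hr hs)

lemma integral_phiT_le_measureReal [IsFiniteMeasure τ] (hr : 0 < r) (hs : 0 ≤ s)
    (hrθ : r ≤ r ^ θ) (hZm : Measurable Z) :
    ∫ ω, phiT r θ s (Z ω) ∂τ ≤ τ.real {ω | Z ω ≤ r ^ θ} := by
  have hmeas : MeasurableSet {ω | Z ω ≤ r ^ θ} := measurableSet_le hZm measurable_const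
  rw [← integral_indicator_one hmeas]
  refine integral_mono (integrable_phiT_comp hr hs hZm) ((integrable_const 1).indicator hmeas)
    fun ω => ?_
  by_cases hω : ω ∈ {ω | Z ω ≤ r ^ θ}
  · rw [indicator_of_mem hω]; exact phiT_le_one hr hs
  · rw [indicator_of_notMem hω, phiT_eq_zero_of_lt hrθ (not_le.1 hω)]

lemma integral_phiT_le_of_pos [IsProbabilityMeasure τ] (hc : 1 ≤ c) (hγ : 0 < γ) (hs : 0 < s)
    (hsm : s < m) (hZm : Measurable Z)
    (hZ : ∀ ρ, 0 < ρ → τ {ω | Z ω ≤ ρ} ≤ ENNReal.ofReal (c * phiK (ρ ^ γ) θ (m / γ) (m / γ) D))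
    (hr : 0 < r) (hrθ : r ≤ r ^ θ) (hrD : r ^ γ ≤ D) :
    ∫ ω, phiT r θ s (Z ω) ∂τ ≤ c * (s / (m - s) + 1) * phiK (r ^ γ) θ (s / γ) (m / γ) D := by
  have hm : 0 < m := hs.trans hsm
  have hD : 0 < D := (by positivity : 0 < r ^ γ).trans_le hrD
  have hp : 1 < m / s := (one_lt_div hs).2 hsm
  rw [(integrable_phiT_comp hr hs.le hZm).integral_eq_integral_meas_lt
    (ae_of_all _ fun _ => phiT_nonneg hr)]
  have hanti : Antitone fun t => τ.real {ω | t < phiT r θ s (Z ω)} :=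
    fun a b hab => measureReal_mono fun ω hω => hab.trans_lt hω
  have hA (t : ℝ) (ht : 0 < t) :
      τ.real {ω | t < phiT r θ s (Z ω)} ≤ c * phiK (r ^ γ) θ 0 (m / γ) D := by
    refine (measureReal_mono fun ω hω => ?_).trans
      (measureReal_le_rpow_le_phiK_zero hc hγ hm.le hZ hr hrD)
    by_contra hlt
    exact (ht.trans hω).ne' (phiT_eq_zero_of_lt hrθ (not_le.1 hlt))
  have hC (t : ℝ) (ht : 0 < t) :
      τ.real {ω | t < phiT r θ s (Z ω)} ≤ c * (r ^ γ / D) ^ (m / γ) * t ^ (-(m / s)) := by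
    refine (measureReal_mono fun ω hω => le_mul_rpow_of_lt_phiT hr hs ht hω).trans
      ((measureReal_le_div_rpow (by linarith) hγ hm.le hZ (by positivity) hD).trans_eq ?_)
    rw [Real.mul_rpow hr.le (by positivity), ← Real.rpow_mul ht.le, mul_div_right_comm,
      Real.mul_rpow (by positivity) (by positivity), ← Real.rpow_mul ht.le,
      show -s⁻¹ * γ * (m / γ) = -(m / s) by field_simp, mul_assoc]
  have hA0 : 0 < c * phiK (r ^ γ) θ 0 (m / γ) D :=
    mul_pos (by linarith) (phiK_pos (by positivity) hD)
  refine (setIntegral_Ioi_le_of_le_min_rpow hp hA0 (by positivity) hanti.measurable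
    (fun _ => measureReal_nonneg) hA hC).trans_eq ?_
  have hinv : (m / s)⁻¹ = s / γ / (m / γ) := by field_simp
  have hinterp : (c * phiK (r ^ γ) θ 0 (m / γ) D) ^ (1 - (m / s)⁻¹) *
      (c * (r ^ γ / D) ^ (m / γ)) ^ (m / s)⁻¹ = c * phiK (r ^ γ) θ (s / γ) (m / γ) D := by
    rw [hinv, Real.mul_rpow (by linarith) (phiK_nonneg (by positivity)),
      Real.mul_rpow (by linarith) (by positivity), mul_mul_mul_comm, ← Real.rpow_add (by linarith),
      sub_add_cancel, Real.rpow_one, phiK_interpolate (by positivity) hrD (by positivity)]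
  rw [mul_assoc, hinterp]
  field_simp [show m / s - 1 ≠ 0 by linarith, show m - s ≠ 0 by linarith]
  ring

lemma integral_phiT_le [IsProbabilityMeasure τ] (hc : 1 ≤ c) (hθ : θ ≤ 1) (hγ : 0 < γ)
    (hs : 0 ≤ s) (hsm : s < m) (hZm : Measurable Z)
    (hZ : ∀ ρ, 0 < ρ → τ {ω | Z ω ≤ ρ} ≤ ENNReal.ofReal (c * phiK (ρ ^ γ) θ (m / γ) (m / γ) D))
    (hr : 0 < r) (hr1 : r < 1) :
    ∫ ω, phiT r θ s (Z ω) ∂τ ≤ c * (s / (m - s) + 1) * phiK (r ^ γ) θ (s / γ) (m / γ) D := by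
  have hrθ : r ≤ r ^ θ := by simpa using Real.rpow_le_rpow_of_exponent_ge hr hr1.le hθ
  by_cases hrD : D < r ^ γ
  · rw [phiK, if_pos hrD, mul_one]
    calc ∫ ω, phiT r θ s (Z ω) ∂τ ≤ ∫ _, (1 : ℝ) ∂τ :=
          integral_mono (integrable_phiT_comp hr hs hZm) (integrable_const 1)
            fun _ => phiT_le_one hr hs
      _ = 1 := by simp
      _ ≤ c * (s / (m - s) + 1) :=
          one_le_mul_of_one_le_of_one_le hc (le_add_of_nonneg_left (div_nonneg hs (by linarith)))
  rcases hs.eq_or_lt with rfl | hs0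
  · refine (integral_phiT_le_measureReal hr le_rfl hrθ hZm).trans
      ((measureReal_le_rpow_le_phiK_zero hc hγ hsm.le hZ hr (not_lt.1 hrD)).trans_eq ?_)
    simp
  · exact integral_phiT_le_of_pos hc hγ hs0 hsm hZm hZ hr hrθ (not_lt.1 hrD)

end TailBound

theorem stmt3_general {n k : ℕ} {Ω : Type*} [MeasurableSpace Ω]
    (τ : Measure Ω) [IsProbabilityMeasure τ]
    (E : Set (EuclideanSpace ℝ (Fin n)))
    (F : Ω → EuclideanSpace ℝ (Fin n) → EuclideanSpace ℝ (Fin k))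
    (hFmeas : Measurable (Function.uncurry F))
    (θ γ s m c : ℝ)
    (hθ1 : θ ≤ 1) (hγ : 0 < γ) (hs0 : 0 ≤ s) (hsm : s < m)
    (hkey : ∀ x ∈ E, ∀ y ∈ E, ∀ r : ℝ, 0 < r →
      τ {ω | ‖F ω x - F ω y‖ ≤ r} ≤
        ENNReal.ofReal (c * phiK (r ^ γ) θ (m / γ) (m / γ) ‖x - y‖)) :
    ∀ r : ℝ, 0 < r → r < 1 → ∀ x ∈ E, ∀ y ∈ E,
      ∫ ω, phiT r θ s ‖F ω x - F ω y‖ ∂τ ≤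
        c * (s / (m - s) + 1) * phiK (r ^ γ) θ (s / γ) (m / γ) ‖x - y‖ := by
  intro r hr0 hr1 x hx y hy
  -- the hypothesis at `y = x`, `r = 1` reads `1 ≤ c`
  have hc : 1 ≤ c := by simpa [phiK] using hkey x hx x hx 1 one_pos
  have hF (z) : Measurable fun ω => F ω z := hFmeas.comp (measurable_id.prodMk measurable_const)
  exact integral_phiT_le hc hθ1 hγ hs0 hsm ((hF x).sub (hF y)).norm (hkey x hx y hy) hr0 hr1

theorem stmt3 {n k : ℕ} {Ω : Type*} [MeasurableSpace Ω]
    (τ : Measure Ω) [IsProbabilityMeasure τ]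
    (E : Set (EuclideanSpace ℝ (Fin n)))
    (F : Ω → EuclideanSpace ℝ (Fin n) → EuclideanSpace ℝ (Fin k))
    (hFmeas : Measurable (Function.uncurry F))
    (hFcont : ∀ ω, Continuous (F ω))
    (θ γ s m c : ℝ)
    (hθ0 : 0 < θ) (hθ1 : θ ≤ 1) (hγ : 0 < γ) (hs0 : 0 ≤ s) (hsm : s < m)
    (hc : 0 < c)
    (hkey : ∀ x ∈ E, ∀ y ∈ E, ∀ r : ℝ, 0 < r →
      τ {ω | ‖F ω x - F ω y‖ ≤ r} ≤
        ENNReal.ofReal (c * phiK (r ^ γ) θ (m / γ) (m / γ) ‖x - y‖)) :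
    ∀ r : ℝ, 0 < r → r < 1 → ∀ x ∈ E, ∀ y ∈ E,
      ∫ ω, phiT r θ s ‖F ω x - F ω y‖ ∂τ ≤
        c * (s / (m - s) + 1) * phiK (r ^ γ) θ (s / γ) (m / γ) ‖x - y‖ :=
  stmt3_general τ E F hFmeas θ γ s m c hθ1 hγ hs0 hsm hkey
end
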